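/- Let a, b ∈ ℝ with a ≠ 0 and a² + b² = 1, and define f : ℝ × (0, π) → ℝ³ by f(ζ, ξ) = ( a cos ζ sin ξ, a sin ζ sin ξ, a (cos ξ + log (tan (ξ/2))) + b ζ ). Then at every point (ζ, ξ) with cos ξ ≠ 0 the partial derivatives f_ζ and f_ξ are linearly independent, and, setting N := (f_ζ × f_ξ)/|f_ζ × f_ξ|, the Gauss curvature ( ⟨f_ζζ, N⟩·⟨f_ξξ, N⟩ − ⟨f_ζξ, N⟩² ) / ( |f_ζ|²·|f_ξ|² − ⟨f_ζ, f_ξ⟩² ) equals −1 there. -/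

import Mathlib

/-!
Write `c = cos ξ`, `s = sin ξ`. The partial derivatives of Dini's surface are explicit, and
`f_ζ × f_ξ = a c • ν` for a vector `ν` with `|ν|² = a² + b² = 1`. By Lagrange's identity
`EG - F² = |f_ζ × f_ξ|² = a²c² ≠ 0`, which gives the linear independence. Since `N = ±ν`, the
second fundamental form is `⟨f_ζζ, ν⟩ = -a²sc`, `⟨f_ζξ, ν⟩ = abc`, `⟨f_ξξ, ν⟩ = a²c/s`, so
`LN - M² = -a²c²(a² + b²) = -(EG - F²)`.
-/

open Matrix

noncomputable section

/-- Partial derivative in the first (`ζ`) direction. -/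
def pd1 (g : ℝ × ℝ → Fin 3 → ℝ) (p : ℝ × ℝ) : Fin 3 → ℝ := fderiv ℝ g p (1, 0)

/-- Partial derivative in the second (`ξ`) direction. -/
def pd2 (g : ℝ × ℝ → Fin 3 → ℝ) (p : ℝ × ℝ) : Fin 3 → ℝ := fderiv ℝ g p (0, 1)

/-- Dini's surface `f(ζ, ξ) = (a cos ζ sin ξ, a sin ζ sin ξ,
a (cos ξ + log tan (ξ/2)) + b ζ)`. -/
def dini (a b : ℝ) : ℝ × ℝ → Fin 3 → ℝ := fun p =>
  ![a * Real.cos p.1 * Real.sin p.2,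
    a * Real.sin p.1 * Real.sin p.2,
    a * (Real.cos p.2 + Real.log (Real.tan (p.2 / 2))) + b * p.1]

open Real Filter Topology

section PartialDerivatives

variable {g g' : ℝ × ℝ → Fin 3 → ℝ} {p : ℝ × ℝ} {v : Fin 3 → ℝ}

lemma pd1_eq_of_hasDerivAt (hg : DifferentiableAt ℝ g p)
    (h : HasDerivAt (fun t => g (t, p.2)) v p.1) : pd1 g p = v :=
  (hg.hasFDerivAt.comp_hasDerivAt p.1
    ((hasDerivAt_id p.1).prodMk (hasDerivAt_const p.1 p.2))).unique h

lemma pd2_eq_of_hasDerivAt (hg : DifferentiableAt ℝ g p)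
    (h : HasDerivAt (fun t => g (p.1, t)) v p.2) : pd2 g p = v :=
  (hg.hasFDerivAt.comp_hasDerivAt p.2
    ((hasDerivAt_const p.2 p.1).prodMk (hasDerivAt_id p.2))).unique h

lemma Filter.EventuallyEq.pd1_eq (h : g =ᶠ[𝓝 p] g') : pd1 g p = pd1 g' p := by
  rw [pd1, pd1, h.fderiv_eq]

lemma Filter.EventuallyEq.pd2_eq (h : g =ᶠ[𝓝 p] g') : pd2 g p = pd2 g' p := by
  rw [pd2, pd2, h.fderiv_eq]

end PartialDerivatives

lemma HasDerivAt.vec3 {x y z : ℝ → ℝ} {x' y' z' t : ℝ} (hx : HasDerivAt x x' t)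
    (hy : HasDerivAt y y' t) (hz : HasDerivAt z z' t) :
    HasDerivAt (fun s => ![x s, y s, z s]) ![x', y', z'] t :=
  hx.finCons (hy.finCons (hz.finCons
    ((hasDerivAt_const t ![]).congr_deriv (Subsingleton.elim _ _))))

lemma DifferentiableAt.vec3 {E : Type*} [NormedAddCommGroup E] [NormedSpace ℝ E]
    {x y z : E → ℝ} {q : E} (hx : DifferentiableAt ℝ x q) (hy : DifferentiableAt ℝ y q)
    (hz : DifferentiableAt ℝ z q) : DifferentiableAt ℝ (fun r => ![x r, y r, z r]) q :=
  (hx.hasFDerivAt.finCons (hy.hasFDerivAt.finCons (hz.hasFDerivAt.finCons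
    (hasFDerivAt_const ![] q)))).differentiableAt

lemma cross_dot_cross_self {R : Type*} [CommRing R] (u v : Fin 3 → R) :
    (u ⨯₃ v) ⬝ᵥ (u ⨯₃ v) = (u ⬝ᵥ u) * (v ⬝ᵥ v) - (u ⬝ᵥ v) ^ 2 := by
  rw [cross_dot_cross, sq, dotProduct_comm v u]

lemma linearIndependent_of_gram_ne_zero {F : Type*} [Field F] {u v : Fin 3 → F}
    (h : (u ⬝ᵥ u) * (v ⬝ᵥ v) - (u ⬝ᵥ v) ^ 2 ≠ 0) : LinearIndependent F ![u, v] := by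
  rw [← crossProduct_ne_zero_iff_linearIndependent]
  intro huv
  apply h
  rw [← cross_dot_cross_self, huv, zero_dotProduct]

lemma curvature_quotient_eq {u v A B C N : Fin 3 → ℝ}
    (hN : N = (√((u ⨯₃ v) ⬝ᵥ (u ⨯₃ v)))⁻¹ • (u ⨯₃ v)) :
    ((A ⬝ᵥ N) * (B ⬝ᵥ N) - (C ⬝ᵥ N) ^ 2) / ((u ⬝ᵥ u) * (v ⬝ᵥ v) - (u ⬝ᵥ v) ^ 2) =
      ((A ⬝ᵥ u ⨯₃ v) * (B ⬝ᵥ u ⨯₃ v) - (C ⬝ᵥ u ⨯₃ v) ^ 2) /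
        ((u ⬝ᵥ u) * (v ⬝ᵥ v) - (u ⬝ᵥ v) ^ 2) ^ 2 := by
  have hW0 : 0 ≤ (u ⨯₃ v) ⬝ᵥ (u ⨯₃ v) := by simpa using dotProduct_self_star_nonneg (u ⨯₃ v)
  subst hN
  simp only [dotProduct_smul, smul_eq_mul]
  rw [← cross_dot_cross_self]
  set W := (u ⨯₃ v) ⬝ᵥ (u ⨯₃ v)
  calc _ = ((A ⬝ᵥ u ⨯₃ v) * (B ⬝ᵥ u ⨯₃ v) - (C ⬝ᵥ u ⨯₃ v) ^ 2) * (√W ^ 2)⁻¹ / W := by ring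
    _ = _ := by rw [sq_sqrt hW0]; ring

lemma hasDerivAt_log_tan_half {x : ℝ} (hx : sin x ≠ 0) :
    HasDerivAt (fun t => log (tan (t / 2))) (sin x)⁻¹ x := by
  have hsin : sin x = 2 * sin (x / 2) * cos (x / 2) := by
    rw [← sin_two_mul]; ring_nf
  have hs : sin (x / 2) ≠ 0 := by rintro h; simp [hsin, h] at hx
  have hc : cos (x / 2) ≠ 0 := by rintro h; simp [hsin, h] at hx
  have ht : tan (x / 2) ≠ 0 := by rw [tan_eq_sin_div_cos]; exact div_ne_zero hs hc
  have hhalf : HasDerivAt (fun t : ℝ => t / 2) (1 / 2) x := by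
    simpa using (hasDerivAt_id x).div_const 2
  refine (((hasDerivAt_tan hc).comp (h₂ := tan) x hhalf).log ht).congr_deriv ?_
  rw [hsin, Function.comp_apply, tan_eq_sin_div_cos]
  field_simp

lemma eventually_sin_snd_ne_zero {p : ℝ × ℝ} (hp : sin p.2 ≠ 0) : ∀ᶠ q in 𝓝 p, sin q.2 ≠ 0 :=
  (continuous_sin.comp continuous_snd).continuousAt.eventually_ne hp

section Dini

variable (a b : ℝ)

def diniζ (p : ℝ × ℝ) : Fin 3 → ℝ :=
  ![-(a * sin p.1 * sin p.2), a * cos p.1 * sin p.2, b]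

def diniξ (p : ℝ × ℝ) : Fin 3 → ℝ :=
  ![a * cos p.1 * cos p.2, a * sin p.1 * cos p.2, a * cos p.2 ^ 2 / sin p.2]

def diniζζ (p : ℝ × ℝ) : Fin 3 → ℝ :=
  ![-(a * cos p.1 * sin p.2), -(a * sin p.1 * sin p.2), 0]

def diniζξ (p : ℝ × ℝ) : Fin 3 → ℝ :=
  ![-(a * sin p.1 * cos p.2), a * cos p.1 * cos p.2, 0]

def diniξξ (p : ℝ × ℝ) : Fin 3 → ℝ :=
  ![-(a * cos p.1 * sin p.2), -(a * sin p.1 * sin p.2),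
    -(a * cos p.2 * (1 + sin p.2 ^ 2) / sin p.2 ^ 2)]

def diniν (p : ℝ × ℝ) : Fin 3 → ℝ :=
  ![a * cos p.1 * cos p.2 - b * sin p.1, b * cos p.1 + a * sin p.1 * cos p.2, -(a * sin p.2)]

variable {a b} {p : ℝ × ℝ}

lemma differentiableAt_dini (hp : sin p.2 ≠ 0) : DifferentiableAt ℝ (dini a b) p := by
  have hl : DifferentiableAt ℝ (fun q : ℝ × ℝ => log (tan (q.2 / 2))) p :=
    (hasDerivAt_log_tan_half hp).differentiableAt.comp p differentiableAt_snd
  exact DifferentiableAt.vec3 (by fun_prop) (by fun_prop) (by fun_prop)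

lemma differentiableAt_diniζ : DifferentiableAt ℝ (diniζ a b) p :=
  DifferentiableAt.vec3 (by fun_prop) (by fun_prop) (by fun_prop)

lemma differentiableAt_diniξ (hp : sin p.2 ≠ 0) : DifferentiableAt ℝ (diniξ a) p :=
  DifferentiableAt.vec3 (by fun_prop) (by fun_prop) (by fun_prop (disch := exact hp))

lemma hasDerivAt_dini_fst (ζ ξ : ℝ) :
    HasDerivAt (fun t => dini a b (t, ξ)) (diniζ a b (ζ, ξ)) ζ := by
  refine HasDerivAt.vec3 ?_ ?_ ?_
  · simpa using (((hasDerivAt_cos ζ).const_mul a).mul_const (sin ξ))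
  · simpa using (((hasDerivAt_sin ζ).const_mul a).mul_const (sin ξ))
  · simpa using ((hasDerivAt_id ζ).const_mul b).const_add (a * (cos ξ + log (tan (ξ / 2))))

lemma hasDerivAt_dini_snd (ζ : ℝ) {ξ : ℝ} (hξ : sin ξ ≠ 0) :
    HasDerivAt (fun t => dini a b (ζ, t)) (diniξ a (ζ, ξ)) ξ := by
  refine HasDerivAt.vec3 ?_ ?_ ?_
  · simpa using (hasDerivAt_sin ξ).const_mul (a * cos ζ)
  · simpa using (hasDerivAt_sin ξ).const_mul (a * sin ζ)
  · refine ((((hasDerivAt_cos ξ).add (hasDerivAt_log_tan_half hξ)).const_mul a).add_const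
      (b * ζ)).congr_deriv ?_
    field_simp
    linear_combination (-a) * sin_sq_add_cos_sq ξ

lemma hasDerivAt_diniζ_fst (ζ ξ : ℝ) :
    HasDerivAt (fun t => diniζ a b (t, ξ)) (diniζζ a (ζ, ξ)) ζ := by
  refine HasDerivAt.vec3 ?_ ?_ (hasDerivAt_const ζ b)
  · simpa using (((hasDerivAt_sin ζ).const_mul a).mul_const (sin ξ)).fun_neg
  · simpa using (((hasDerivAt_cos ζ).const_mul a).mul_const (sin ξ))

lemma hasDerivAt_diniξ_fst (ζ ξ : ℝ) :
    HasDerivAt (fun t => diniξ a (t, ξ)) (diniζξ a (ζ, ξ)) ζ := by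
  refine HasDerivAt.vec3 ?_ ?_ (hasDerivAt_const ζ (a * cos ξ ^ 2 / sin ξ))
  · simpa using (((hasDerivAt_cos ζ).const_mul a).mul_const (cos ξ))
  · simpa using (((hasDerivAt_sin ζ).const_mul a).mul_const (cos ξ))

lemma hasDerivAt_diniξ_snd (ζ : ℝ) {ξ : ℝ} (hξ : sin ξ ≠ 0) :
    HasDerivAt (fun t => diniξ a (ζ, t)) (diniξξ a (ζ, ξ)) ξ := by
  refine HasDerivAt.vec3 ?_ ?_ ?_
  · simpa using (hasDerivAt_cos ξ).const_mul (a * cos ζ)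
  · simpa using (hasDerivAt_cos ξ).const_mul (a * sin ζ)
  · refine ((((hasDerivAt_cos ξ).fun_pow 2).const_mul a).div (hasDerivAt_sin ξ) hξ).congr_deriv ?_
    field_simp
    linear_combination (-(a * cos ξ)) * sin_sq_add_cos_sq ξ

lemma pd1_dini (hp : sin p.2 ≠ 0) : pd1 (dini a b) p = diniζ a b p :=
  pd1_eq_of_hasDerivAt (differentiableAt_dini hp) (hasDerivAt_dini_fst p.1 p.2)

lemma pd2_dini (hp : sin p.2 ≠ 0) : pd2 (dini a b) p = diniξ a p :=
  pd2_eq_of_hasDerivAt (differentiableAt_dini hp) (hasDerivAt_dini_snd p.1 hp)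

lemma pd1_pd1_dini (hp : sin p.2 ≠ 0) : pd1 (pd1 (dini a b)) p = diniζζ a p := by
  have h : pd1 (dini a b) =ᶠ[𝓝 p] diniζ a b :=
    (eventually_sin_snd_ne_zero hp).mono fun q hq => pd1_dini hq
  rw [h.pd1_eq]
  exact pd1_eq_of_hasDerivAt differentiableAt_diniζ (hasDerivAt_diniζ_fst p.1 p.2)

lemma pd1_pd2_dini (hp : sin p.2 ≠ 0) : pd1 (pd2 (dini a b)) p = diniζξ a p := by
  have h : pd2 (dini a b) =ᶠ[𝓝 p] diniξ a :=
    (eventually_sin_snd_ne_zero hp).mono fun q hq => pd2_dini hq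
  rw [h.pd1_eq]
  exact pd1_eq_of_hasDerivAt (differentiableAt_diniξ hp) (hasDerivAt_diniξ_fst p.1 p.2)

lemma pd2_pd2_dini (hp : sin p.2 ≠ 0) : pd2 (pd2 (dini a b)) p = diniξξ a p := by
  have h : pd2 (dini a b) =ᶠ[𝓝 p] diniξ a :=
    (eventually_sin_snd_ne_zero hp).mono fun q hq => pd2_dini hq
  rw [h.pd2_eq]
  exact pd2_eq_of_hasDerivAt (differentiableAt_diniξ hp) (hasDerivAt_diniξ_snd p.1 hp)

lemma diniζ_cross_diniξ (hp : sin p.2 ≠ 0) :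
    diniζ a b p ⨯₃ diniξ a p = (a * cos p.2) • diniν a b p := by
  rw [cross_apply, diniν, smul_vec3]
  simp only [diniζ, diniξ, cons_val_zero, cons_val_one, cons_val_two, head_cons, tail_cons,
    smul_eq_mul]
  refine vec3_eq ?_ ?_ ?_
  · field_simp
  · field_simp
    ring
  · linear_combination (-(a ^ 2 * sin p.2 * cos p.2)) * sin_sq_add_cos_sq p.1

lemma diniν_dot_self (hab : a ^ 2 + b ^ 2 = 1) : diniν a b p ⬝ᵥ diniν a b p = 1 := by
  rw [diniν, vec3_dotProduct']
  linear_combination (a ^ 2 * cos p.2 ^ 2 + b ^ 2) * sin_sq_add_cos_sq p.1 +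
    a ^ 2 * sin_sq_add_cos_sq p.2 + hab

lemma dini_gram (hab : a ^ 2 + b ^ 2 = 1) (hp : sin p.2 ≠ 0) :
    (diniζ a b p ⬝ᵥ diniζ a b p) * (diniξ a p ⬝ᵥ diniξ a p) - (diniζ a b p ⬝ᵥ diniξ a p) ^ 2 =
      (a * cos p.2) ^ 2 := by
  rw [← cross_dot_cross_self, diniζ_cross_diniξ hp, smul_dotProduct, dotProduct_smul,
    diniν_dot_self hab, smul_eq_mul, smul_eq_mul]
  ring

lemma diniζζ_dot_diniν : diniζζ a p ⬝ᵥ diniν a b p = -(a ^ 2 * sin p.2 * cos p.2) := by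
  rw [diniζζ, diniν, vec3_dotProduct']
  linear_combination (-(a ^ 2 * sin p.2 * cos p.2)) * sin_sq_add_cos_sq p.1

lemma diniζξ_dot_diniν : diniζξ a p ⬝ᵥ diniν a b p = a * b * cos p.2 := by
  rw [diniζξ, diniν, vec3_dotProduct']
  linear_combination (a * b * cos p.2) * sin_sq_add_cos_sq p.1

lemma diniξξ_dot_diniν (hp : sin p.2 ≠ 0) :
    diniξξ a p ⬝ᵥ diniν a b p = a ^ 2 * cos p.2 / sin p.2 := by
  rw [diniξξ, diniν, vec3_dotProduct']
  field_simp
  linear_combination (-(a ^ 2 * cos p.2 * sin p.2 ^ 2)) * sin_sq_add_cos_sq p.1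

end Dini

/-- for `a ≠ 0`, `a² + b² = 1`, at every point of `ℝ × (0, π)` with
`cos ξ ≠ 0`, Dini's surface is immersed and its Gauss curvature equals `−1`. -/
theorem statement16 (a b : ℝ) (ha : a ≠ 0) (hab : a ^ 2 + b ^ 2 = 1)
    (f : ℝ × ℝ → Fin 3 → ℝ) (hf : f = dini a b) :
    ∀ p : ℝ × ℝ, p.2 ∈ Set.Ioo 0 Real.pi → Real.cos p.2 ≠ 0 →
      LinearIndependent ℝ ![pd1 f p, pd2 f p] ∧
      ∀ N : Fin 3 → ℝ,
        N = (Real.sqrt ((pd1 f p ⨯₃ pd2 f p) ⬝ᵥ (pd1 f p ⨯₃ pd2 f p)))⁻¹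
              • (pd1 f p ⨯₃ pd2 f p) →
        ((pd1 (pd1 f) p ⬝ᵥ N) * (pd2 (pd2 f) p ⬝ᵥ N) - (pd1 (pd2 f) p ⬝ᵥ N) ^ 2) /
          ((pd1 f p ⬝ᵥ pd1 f p) * (pd2 f p ⬝ᵥ pd2 f p) - (pd1 f p ⬝ᵥ pd2 f p) ^ 2)
          = -1 := by
  subst hf
  intro p hp hcos
  have hsin : sin p.2 ≠ 0 := (sin_pos_of_pos_of_lt_pi hp.1 hp.2).ne'
  have hac : a * cos p.2 ≠ 0 := mul_ne_zero ha hcos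
  rw [pd1_dini hsin, pd2_dini hsin, pd1_pd1_dini hsin, pd1_pd2_dini hsin, pd2_pd2_dini hsin]
  refine ⟨linearIndependent_of_gram_ne_zero ?_, fun N hN => ?_⟩
  · rw [dini_gram hab hsin]
    exact pow_ne_zero 2 hac
  rw [curvature_quotient_eq hN, dini_gram hab hsin, diniζ_cross_diniξ hsin]
  simp only [dotProduct_smul, smul_eq_mul, diniζζ_dot_diniν, diniζξ_dot_diniν,
    diniξξ_dot_diniν hsin]
  field_simp
  linear_combination -hab
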